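/- arXiv:1602.07072 — 4 statements merged into one kernel-verified Lean document; each statement's English description precedes it below -/
import Mathlib

section
/- Time inequality for the timelike Hilbert metric: for all p, q, r ∈ Ω with p ≺ q and q ≺ r, one has p ≺ r and H(p,q) + H(q,r) ≤ H(p,r). -/
open RealInnerProductSpace
open scoped Classical

noncomputable section

/-- Euclidean space of dimension `n`. -/
abbrev Euc (n : ℕ) := EuclideanSpace ℝ (Fin n)

/-- The exterior `Ω = E \ closure I` of the convex set `I`. -/
def Omega {n : ℕ} (I : Set (Euc n)) : Set (Euc n) := (closure I)ᶜ

/-- The timelike Funk partial order: `p < q` iff `p ≠ q`, the segment `[p,q]` lies in `Ω`,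
and the ray from `p` through `q` enters `I` beyond `q`. -/
def funkLt {n : ℕ} (I : Set (Euc n)) (p q : Euc n) : Prop :=
  p ≠ q ∧ segment ℝ p q ⊆ Omega I ∧ ∃ t > (0:ℝ), q + t • (q - p) ∈ I

/-- The parameter at which the ray from `p` through `q` first hits `closure I` (beyond `q`). -/
def funkT0 {n : ℕ} (I : Set (Euc n)) (p q : Euc n) : ℝ :=
  sInf {t : ℝ | 0 < t ∧ q + t • (q - p) ∈ closure I}

/-- The point `b(p,q)` where the ray from `p` through `q` first hits `K = frontier I`. -/
def funkB {n : ℕ} (I : Set (Euc n)) (p q : Euc n) : Euc n :=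
  q + funkT0 I p q • (q - p)

/-- The timelike Funk metric `F(p,q) = log (dist p b(p,q) / dist q b(p,q))`, with `F(p,p) = 0`. -/
def funkF {n : ℕ} (I : Set (Euc n)) (p q : Euc n) : ℝ :=
  if p = q then 0 else Real.log (dist p (funkB I p q) / dist q (funkB I p q))

/-- Supporting hyperplanes of `I`, encoded as pairs `(u, c)` with `‖u‖ = 1`:
`I ⊆ {x | ⟪u,x⟫ < c}` and `closure I` meets `{x | ⟪u,x⟫ = c}`. -/
def SuppH {n : ℕ} (I : Set (Euc n)) : Set (Euc n × ℝ) :=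
  {uc | ‖uc.1‖ = 1 ∧ I ⊆ {x | ⟪uc.1, x⟫ < uc.2} ∧
    (closure I ∩ {x | ⟪uc.1, x⟫ = uc.2}).Nonempty}

/-- `𝒫(z)`: supporting hyperplanes of `I` separating `z` from `I`. -/
def SuppHSep {n : ℕ} (I : Set (Euc n)) (z : Euc n) : Set (Euc n × ℝ) :=
  {uc | uc ∈ SuppH I ∧ uc.2 < ⟪uc.1, z⟫}

/-- `D(p)`: the cone of timelike directions at `p`. -/
def Dcone {n : ℕ} (I : Set (Euc n)) (p : Euc n) : Set (Euc n) :=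
  {v | ∃ t > (0:ℝ), p + t • v ∈ I}

/-- `τ(p,v)`: the time for the ray `p + t • v` to reach `closure I`. -/
def tauF {n : ℕ} (I : Set (Euc n)) (p v : Euc n) : ℝ :=
  sInf {t : ℝ | 0 < t ∧ p + t • v ∈ closure I}

/-- The timelike Minkowski functional `P(p,v) = 1/τ(p,v)` of the timelike Funk metric. -/
def Pmink {n : ℕ} (I : Set (Euc n)) (p v : Euc n) : ℝ := 1 / tauF I p v

/-- The domain `Ω = E \ (closure I₁ ∪ closure I₂)` of the timelike Hilbert metric. -/
def HOmega {n : ℕ} (I1 I2 : Set (Euc n)) : Set (Euc n) :=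
  (closure I1 ∪ closure I2)ᶜ

/-- The timelike Hilbert order: `p ≺ q` iff `p <₂ q` (Funk order of `I₂`) and
`q <₁ p` (Funk order of `I₁`). -/
def hilbLt {n : ℕ} (I1 I2 : Set (Euc n)) (p q : Euc n) : Prop :=
  funkLt I2 p q ∧ funkLt I1 q p

/-- The timelike Hilbert metric `H(p,q) = F₂(p,q) + F₁(q,p)` (with `H(p,p) = 0`). -/
def hilbH {n : ℕ} (I1 I2 : Set (Euc n)) (p q : Euc n) : ℝ :=
  funkF I2 p q + funkF I1 q p

/-! The Funk metric of a supporting half-space `{f < c}` is `log ((f p - c) / (f q - c))`, and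
it dominates the Funk metric of `I` along every ray, with equality where the half-space touches `I`
at `b(p,q)`. Supporting `I` at `b(p,r)` and telescoping the half-space logarithms along
`p < q < r` gives `F(p,q) + F(q,r) ≤ F(p,r)`; the Hilbert inequality is the sum of the two Funk
inequalities, for `I₂` along `p, q, r` and for `I₁` along `r, q, p`. -/

theorem map_add_smul_sub {E F : Type*} [AddCommGroup E] [Module ℝ E] [FunLike F E ℝ]
    [LinearMapClass F ℝ E ℝ] (f : F) (p q : E) (t : ℝ) :
    f (q + t • (q - p)) = f q + t * (f q - f p) := by
  simp only [map_add, map_smul, map_sub, smul_eq_mul]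

theorem funkT0_lt {n : ℕ} {I : Set (Euc n)} {p q : Euc n} (hI : IsOpen I) {t : ℝ} (ht : 0 < t)
    (htI : q + t • (q - p) ∈ I) : funkT0 I p q < t := by
  have hline : Continuous fun t : ℝ => q + t • (q - p) := by fun_prop
  obtain ⟨s, hst, hs, hsI⟩ :=
    ((lt_mem_nhds ht).and ((hI.preimage hline).mem_nhds htI)).exists_lt
  have hbdd : BddBelow {t : ℝ | 0 < t ∧ q + t • (q - p) ∈ closure I} :=
    ⟨0, fun _ hs => hs.1.le⟩
  exact (csInf_le hbdd ⟨hs, subset_closure hsI⟩).trans_lt hst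

namespace funkLt

variable {n : ℕ} {I : Set (Euc n)} {p q : Euc n}

theorem right_notMem_closure (h : funkLt I p q) : q ∉ closure I :=
  h.2.1 (right_mem_segment ℝ p q)

theorem funkT0_pos_and_funkB_mem_closure (h : funkLt I p q) :
    0 < funkT0 I p q ∧ funkB I p q ∈ closure I := by
  obtain ⟨t, ht, htI⟩ := h.2.2
  have hline : Continuous fun t : ℝ => q + t • (q - p) := by fun_prop
  set S := {t : ℝ | 0 < t ∧ q + t • (q - p) ∈ closure I}
  have hS : S = (fun t : ℝ => q + t • (q - p)) ⁻¹' closure I ∩ Set.Ici 0 := by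
    ext t
    refine ⟨fun hs => ⟨hs.2, hs.1.le⟩, fun ⟨hs, ht⟩ => ⟨ht.lt_of_ne ?_, hs⟩⟩
    rintro rfl
    exact h.right_notMem_closure (by simpa using hs)
  have hclosed : IsClosed S := hS ▸ (isClosed_closure.preimage hline).inter isClosed_Ici
  exact hclosed.csInf_mem ⟨t, ht, subset_closure htI⟩ ⟨0, fun _ hs => hs.1.le⟩

theorem funkT0_pos (h : funkLt I p q) : 0 < funkT0 I p q :=
  h.funkT0_pos_and_funkB_mem_closure.1

theorem funkB_mem_closure (h : funkLt I p q) : funkB I p q ∈ closure I :=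
  h.funkT0_pos_and_funkB_mem_closure.2

theorem funkB_notMem (hI : IsOpen I) (h : funkLt I p q) : funkB I p q ∉ I :=
  fun hb => (funkT0_lt hI h.funkT0_pos hb).false

theorem apply_lt_apply {f : Euc n →L[ℝ] ℝ} {c : ℝ} (h : funkLt I p q) (hf : ∀ x ∈ I, f x < c)
    (hq : c ≤ f q) : f q < f p := by
  obtain ⟨t, ht, htI⟩ := h.2.2
  have := hf _ htI
  rw [map_add_smul_sub] at this
  nlinarith

theorem apply_funkB_lt (hI : IsOpen I) {f : Euc n →L[ℝ] ℝ} (h : funkLt I p q)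
    (hf : ∀ x ∈ I, f x < f (funkB I p q)) : f (funkB I p q) < f q := by
  obtain ⟨t, ht, htI⟩ := h.2.2
  have hlt := funkT0_lt hI ht htI
  have hx := hf _ htI
  rw [funkB, map_add_smul_sub, map_add_smul_sub] at *
  nlinarith [h.funkT0_pos]

end funkLt

section Funk

variable {n : ℕ} {I : Set (Euc n)} {p q r : Euc n}

theorem funkF_eq_log_funkT0 (h : funkLt I p q) :
    funkF I p q = Real.log ((1 + funkT0 I p q) / funkT0 I p q) := by
  have ht0 := h.funkT0_pos
  have hqp : ‖q - p‖ ≠ 0 := norm_ne_zero_iff.2 (sub_ne_zero.2 (Ne.symm h.1))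
  have hp : dist p (funkB I p q) = (1 + funkT0 I p q) * ‖q - p‖ := by
    rw [dist_eq_norm, funkB, show p - (q + funkT0 I p q • (q - p)) =
      -((1 + funkT0 I p q) • (q - p)) by module, norm_neg, norm_smul,
      Real.norm_of_nonneg (by linarith)]
  have hq : dist q (funkB I p q) = funkT0 I p q * ‖q - p‖ := by
    rw [dist_eq_norm, funkB, show q - (q + funkT0 I p q • (q - p)) =
      -(funkT0 I p q • (q - p)) by module, norm_neg, norm_smul, Real.norm_of_nonneg ht0.le]
  rw [funkF, if_neg h.1, hp, hq, mul_div_mul_right _ _ hqp]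

theorem funkF_eq_log_sub_apply_funkB {f : Euc n →L[ℝ] ℝ} (h : funkLt I p q) (hf : f q ≠ f p) :
    funkF I p q = Real.log ((f p - f (funkB I p q)) / (f q - f (funkB I p q))) := by
  have ht0 := h.funkT0_pos
  have hqp : f q - f p ≠ 0 := sub_ne_zero.2 hf
  rw [funkF_eq_log_funkT0 h, funkB, map_add_smul_sub]
  congr 1
  field_simp
  ring

theorem funkF_le_log {f : Euc n →L[ℝ] ℝ} {c : ℝ} (h : funkLt I p q) (hf : ∀ x ∈ I, f x < c)
    (hq : c < f q) : funkF I p q ≤ Real.log ((f p - c) / (f q - c)) := by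
  have hqp := h.apply_lt_apply hf hq.le
  have hb : f (funkB I p q) ≤ c :=
    closure_minimal (fun x hx => (hf x hx).le) (isClosed_le f.continuous continuous_const)
      h.funkB_mem_closure
  rw [funkF_eq_log_sub_apply_funkB h hqp.ne]
  refine Real.log_le_log (div_pos (by linarith) (by linarith)) ?_
  rw [div_le_div_iff₀ (by linarith) (by linarith)]
  nlinarith

theorem funkLt_iff (hI : IsOpen I) (hconv : Convex ℝ I) :
    funkLt I p q ↔ q ∉ closure I ∧ ∃ t > (0:ℝ), q + t • (q - p) ∈ I := by
  refine ⟨fun h => ⟨h.right_notMem_closure, h.2.2⟩, ?_⟩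
  rintro ⟨hq, t, ht, hx⟩
  refine ⟨?_, ?_, t, ht, hx⟩
  · rintro rfl
    exact hq (subset_closure (by simpa using hx))
  rintro z ⟨a, b, ha, -, hab, rfl⟩ hz
  obtain rfl : b = 1 - a := by linarith
  obtain rfl | ha := ha.eq_or_lt
  · exact hq (by simpa using hz)
  -- `q` lies strictly between a point of `closure I` on `[p, q]` and a point of `I` beyond `q`.
  have hmem := hconv.combo_closure_interior_mem_interior hz (hI.interior_eq.symm ▸ hx)
    (a := t / (a + t)) (b := a / (a + t)) (by positivity) (by positivity) (by field_simp; ring)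
  rw [hI.interior_eq] at hmem
  exact hq (subset_closure (by convert hmem using 1; match_scalars <;> field_simp <;> ring))

theorem funkLt_trans (hI : IsOpen I) (hconv : Convex ℝ I) (hpq : funkLt I p q)
    (hqr : funkLt I q r) : funkLt I p r := by
  obtain ⟨s, hs, hsI⟩ := hpq.2.2
  obtain ⟨t, ht, htI⟩ := hqr.2.2
  refine (funkLt_iff hI hconv).2
    ⟨hqr.right_notMem_closure, s * t / (1 + s + t), by positivity, ?_⟩
  -- `r + w • (r - p)`, `w = s t / (1 + s + t)`, is a convex combination of the two points of `I`.
  have hcomb := hconv hsI htI (a := t / (1 + s + t)) (b := (1 + s) / (1 + s + t))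
    (by positivity) (by positivity) (by field_simp; ring)
  convert hcomb using 1
  match_scalars <;> field_simp <;> ring

theorem funkF_add_le (hI : IsOpen I) (hconv : Convex ℝ I) (hpq : funkLt I p q)
    (hqr : funkLt I q r) : funkF I p q + funkF I q r ≤ funkF I p r := by
  have hpr := funkLt_trans hI hconv hpq hqr
  obtain ⟨f, hf⟩ := geometric_hahn_banach_open_point hconv hI (hpr.funkB_notMem hI)
  set c := f (funkB I p r)
  have hcr : c < f r := hpr.apply_funkB_lt hI hf
  have hrq : f r < f q := hqr.apply_lt_apply hf hcr.le
  have hqp : f q < f p := hpq.apply_lt_apply hf (hcr.trans hrq).le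
  calc funkF I p q + funkF I q r
      ≤ Real.log ((f p - c) / (f q - c)) + Real.log ((f q - c) / (f r - c)) :=
        add_le_add (funkF_le_log hpq hf (hcr.trans hrq)) (funkF_le_log hqr hf hcr)
    _ = Real.log ((f p - c) / (f r - c)) := by
        have hpc : 0 < f p - c := by linarith
        have hqc : 0 < f q - c := by linarith
        have hrc : 0 < f r - c := by linarith
        rw [← Real.log_mul (div_pos hpc hqc).ne' (div_pos hqc hrc).ne']
        congr 1
        field_simp
    _ = funkF I p r := (funkF_eq_log_sub_apply_funkB hpr (hrq.trans hqp).ne).symm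

end Funk

theorem hilbH_time_inequality_general {n : ℕ} (I1 I2 : Set (Euc n))
    (hop1 : IsOpen I1) (hconv1 : Convex ℝ I1)
    (hop2 : IsOpen I2) (hconv2 : Convex ℝ I2)
    (p q r : Euc n)
    (hpq : hilbLt I1 I2 p q) (hqr : hilbLt I1 I2 q r) :
    hilbLt I1 I2 p r ∧ hilbH I1 I2 p q + hilbH I1 I2 q r ≤ hilbH I1 I2 p r := by
  obtain ⟨hpq2, hqp1⟩ := hpq
  obtain ⟨hqr2, hrq1⟩ := hqr
  refine ⟨⟨funkLt_trans hop2 hconv2 hpq2 hqr2, funkLt_trans hop1 hconv1 hrq1 hqp1⟩, ?_⟩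
  have h2 := funkF_add_le hop2 hconv2 hpq2 hqr2
  have h1 := funkF_add_le hop1 hconv1 hrq1 hqp1
  simp only [hilbH]
  linarith

/-- time inequality for the timelike Hilbert metric: if `p ≺ q` and
`q ≺ r`, then `p ≺ r` and `H(p,q) + H(q,r) ≤ H(p,r)`. -/
theorem hilbH_time_inequality {n : ℕ} (hn : 1 ≤ n) (I1 I2 : Set (Euc n))
    (hne1 : I1.Nonempty) (hop1 : IsOpen I1) (hconv1 : Convex ℝ I1)
    (hne2 : I2.Nonempty) (hop2 : IsOpen I2) (hconv2 : Convex ℝ I2)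
    (hdisj : Disjoint (closure I1) (closure I2))
    (p q r : Euc n)
    (hp : p ∈ HOmega I1 I2) (hq : q ∈ HOmega I1 I2) (hr : r ∈ HOmega I1 I2)
    (hpq : hilbLt I1 I2 p q) (hqr : hilbLt I1 I2 q r) :
    hilbLt I1 I2 p r ∧ hilbH I1 I2 p q + hilbH I1 I2 q r ≤ hilbH I1 I2 p r :=
  hilbH_time_inequality_general I1 I2 hop1 hconv1 hop2 hconv2 p q r hpq hqr
end
end

section
/- Euclidean segments are geodesics of the timelike Hilbert metric: for all p, q, r ∈ Ω with p ≺ q, q ≺ r, and q ∈ openSegment ℝ p r (i.e. p, q, r collinear with q strictly between p and r), the time inequality is an equality: H(p,q) + H(q,r) = H(p,r). -/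
open RealInnerProductSpace
open scoped Classical

noncomputable section

/-!
Parametrize the line through `p` and `r` as `s ↦ lineMap p r s`, so that `q` sits at a parameter
`0 < b < 1`. Since `[q, r]` misses `closure I`, the Funk boundary points `b(p,q)`, `b(q,r)` and
`b(p,r)` are all the first point of `closure I` on this line beyond `r`, at some parameter `s > 1`.
Hence `F(p,q) = log (s / (s - b))`, `F(q,r) = log ((s - b) / (s - 1))` and
`F(p,r) = log (s / (s - 1))`, which telescope. Applying this to `I₂` along `p, q, r` and to `I₁`
along `r, q, p` gives additivity of `H`.
-/

open AffineMap Set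

lemma lineMap_add_smul_sub_lineMap {k E : Type*} [CommRing k] [AddCommGroup E] [Module k E]
    (x y : E) (a c t : k) :
    lineMap x y c + t • (lineMap x y c - lineMap x y a) = lineMap x y (c + t * (c - a)) := by
  simp only [lineMap_apply_module']
  module

section Funk

variable {n : ℕ} {I : Set (Euc n)} {x y : Euc n}

variable (I x y) in
def hitsAfter (c : ℝ) : Set ℝ := {s | c < s ∧ lineMap x y s ∈ closure I}

lemma hitsAfter_nonempty_of_funkLt {a c : ℝ} (hac : a < c)
    (h : funkLt I (lineMap x y a) (lineMap x y c)) : (hitsAfter I x y c).Nonempty := by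
  obtain ⟨t, ht, hmem⟩ := h.2.2
  refine ⟨c + t * (c - a), by nlinarith, ?_⟩
  rw [← lineMap_add_smul_sub_lineMap]
  exact subset_closure hmem

lemma hitsAfter_eq_of_forall_Ioc_notMem {b c : ℝ} (hbc : b ≤ c)
    (hgap : ∀ s ∈ Ioc b c, lineMap x y s ∉ closure I) : hitsAfter I x y b = hitsAfter I x y c := by
  ext s
  constructor
  · rintro ⟨hs, hmem⟩
    exact ⟨lt_of_not_ge fun hsc => hgap s ⟨hs, hsc⟩ hmem, hmem⟩
  · rintro ⟨hs, hmem⟩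
    exact ⟨hbc.trans_lt hs, hmem⟩

lemma lt_sInf_hitsAfter {c : ℝ} (hc : lineMap x y c ∉ closure I)
    (hne : (hitsAfter I x y c).Nonempty) : c < sInf (hitsAfter I x y c) := by
  have hbdd : BddBelow (hitsAfter I x y c) := ⟨c, fun _ hs => hs.1.le⟩
  have hclosed : IsClosed {s : ℝ | c ≤ s ∧ lineMap x y s ∈ closure I} :=
    (isClosed_le continuous_const continuous_id).inter
      (isClosed_closure.preimage lineMap_continuous)
  obtain ⟨hle, hmem⟩ : c ≤ sInf (hitsAfter I x y c) ∧
      lineMap x y (sInf (hitsAfter I x y c)) ∈ closure I :=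
    closure_minimal (fun s hs => (⟨hs.1.le, hs.2⟩ : c ≤ s ∧ _)) hclosed
      (csInf_mem_closure hne hbdd)
  exact hle.lt_of_ne fun h => hc (h ▸ hmem)

lemma funkB_lineMap {a c : ℝ} (hac : a < c) (hne : (hitsAfter I x y c).Nonempty) :
    funkB I (lineMap x y a) (lineMap x y c) = lineMap x y (sInf (hitsAfter I x y c)) := by
  set g : ℝ → ℝ := fun t => c + t * (c - a)
  set T := {t : ℝ | 0 < t ∧ lineMap x y (g t) ∈ closure I}
  have himage : g '' T = hitsAfter I x y c := by
    ext s
    constructor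
    · rintro ⟨t, ⟨ht, hmem⟩, rfl⟩
      exact ⟨by simp only [g]; nlinarith, hmem⟩
    · rintro ⟨hs, hmem⟩
      have hgs : g ((s - c) / (c - a)) = s := by
        simp only [g]
        rw [div_mul_cancel₀ _ (sub_pos.2 hac).ne']
        ring
      exact ⟨(s - c) / (c - a), ⟨div_pos (sub_pos.2 hs) (sub_pos.2 hac), by rwa [hgs]⟩, hgs⟩
  have hg : Monotone g := fun t t' htt' => by simp only [g]; nlinarith
  rw [← himage] at hne ⊢
  simp only [funkB, funkT0, lineMap_add_smul_sub_lineMap]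
  rw [← hg.map_csInf_of_continuousAt (by fun_prop) hne.of_image ⟨0, fun t ht => ht.1.le⟩]

lemma funkF_lineMap (hxy : x ≠ y) {a c : ℝ} (hac : a < c) (hne : (hitsAfter I x y c).Nonempty) :
    funkF I (lineMap x y a) (lineMap x y c) =
      Real.log ((sInf (hitsAfter I x y c) - a) / (sInf (hitsAfter I x y c) - c)) := by
  have hcs : c ≤ sInf (hitsAfter I x y c) := le_csInf hne fun s hs => hs.1.le
  rw [funkF, if_neg ((lineMap_injective ℝ hxy).ne hac.ne), funkB_lineMap hac hne,
    dist_lineMap_lineMap, dist_lineMap_lineMap, mul_div_mul_right _ _ (dist_ne_zero.2 hxy),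
    Real.dist_eq, Real.dist_eq, abs_sub_comm a, abs_sub_comm c, abs_of_pos (by linarith),
    abs_of_nonneg (by linarith)]

theorem funkF_add_of_mem_openSegment {p q r : Euc n} (hqr : funkLt I q r)
    (hq : q ∈ openSegment ℝ p r) : funkF I p q + funkF I q r = funkF I p r := by
  rw [openSegment_eq_image_lineMap] at hq
  obtain ⟨b, ⟨hb0, hb1⟩, rfl⟩ := hq
  have hpr : p ≠ r := by
    rintro rfl
    exact hqr.1 (lineMap_same_apply p b)
  have hgap : ∀ s ∈ Ioc b 1, lineMap p r s ∉ closure I := by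
    have hseg : segment ℝ (lineMap p r b) r = lineMap p r '' Icc b 1 := by
      rw [← segment_eq_Icc hb1.le, image_segment, lineMap_apply_one]
    exact fun s hs => hqr.2.1 (hseg ▸ mem_image_of_mem _ (Ioc_subset_Icc_self hs))
  have hne : (hitsAfter I p r 1).Nonempty :=
    hitsAfter_nonempty_of_funkLt hb1 (by rwa [lineMap_apply_one])
  have hhits : hitsAfter I p r b = hitsAfter I p r 1 :=
    hitsAfter_eq_of_forall_Ioc_notMem hb1.le hgap
  have hlt : 1 < sInf (hitsAfter I p r 1) :=
    lt_sInf_hitsAfter (by rw [lineMap_apply_one]; exact hqr.2.1 (right_mem_segment ℝ _ r)) hne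
  have hpq := funkF_lineMap hpr hb0 (hhits ▸ hne)
  have hqr' := funkF_lineMap hpr hb1 hne
  have hpr' := funkF_lineMap hpr zero_lt_one hne
  rw [lineMap_apply_zero] at hpq hpr'
  rw [lineMap_apply_one] at hqr' hpr'
  rw [hpq, hqr', hpr', hhits]
  set s := sInf (hitsAfter I p r 1)
  have hsb : 0 < s - b := by linarith
  rw [← Real.log_mul (div_pos (by linarith) hsb).ne' (div_pos hsb (by linarith)).ne',
    div_mul_div_cancel₀ hsb.ne']

end Funk

theorem hilbH_add_eq_of_openSegment_general {n : ℕ} (I1 I2 : Set (Euc n))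
    (p q r : Euc n)
    (hpq : hilbLt I1 I2 p q) (hqr : hilbLt I1 I2 q r)
    (hseg : q ∈ openSegment ℝ p r) :
    hilbH I1 I2 p q + hilbH I1 I2 q r = hilbH I1 I2 p r := by
  have h2 := funkF_add_of_mem_openSegment hqr.1 hseg
  have h1 := funkF_add_of_mem_openSegment hpq.2 (openSegment_symm ℝ p r ▸ hseg)
  simp only [hilbH]
  linarith

/-- Euclidean segments are geodesics of the timelike Hilbert metric:
if `p ≺ q`, `q ≺ r` and `q` lies strictly between `p` and `r` on a Euclidean segment,
then the time inequality is an equality. -/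
theorem hilbH_add_eq_of_openSegment {n : ℕ} (hn : 1 ≤ n) (I1 I2 : Set (Euc n))
    (hne1 : I1.Nonempty) (hop1 : IsOpen I1) (hconv1 : Convex ℝ I1)
    (hne2 : I2.Nonempty) (hop2 : IsOpen I2) (hconv2 : Convex ℝ I2)
    (hdisj : Disjoint (closure I1) (closure I2))
    (p q r : Euc n)
    (hp : p ∈ HOmega I1 I2) (hq : q ∈ HOmega I1 I2) (hr : r ∈ HOmega I1 I2)
    (hpq : hilbLt I1 I2 p q) (hqr : hilbLt I1 I2 q r)
    (hseg : q ∈ openSegment ℝ p r) :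
    hilbH I1 I2 p q + hilbH I1 I2 q r = hilbH I1 I2 p r :=
  hilbH_add_eq_of_openSegment_general I1 I2 p q r hpq hqr hseg
end
end

section
/- The timelike Hilbert metric is the timelike Finsler metric of the functional P_H(p,v) = P₂(p,v) + P₁(p,−v): for p, q ∈ Ω with p ≺ q, along the straight segment σ(t) = p + t • (q − p) one has q − p ∈ D₂(σ(t)) and p − q ∈ D₁(σ(t)) for every t ∈ [0,1], and ∫₀¹ P_H(σ(t), q − p) dt = H(p,q); moreover, for every C¹ curve γ : [0,1] → Ω with γ(0) = p, γ(1) = q and γ'(t) ∈ D₂(γ(t)) ∩ (−D₁(γ(t))) for all t ∈ [0,1], ∫₀¹ P_H(γ(t), γ'(t)) dt ≤ H(p,q). -/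
open RealInnerProductSpace
open scoped Classical

noncomputable section

/-- The timelike Minkowski functional of the timelike Hilbert metric:
`P_H(p,v) = P₂(p,v) + P₁(p,−v)`. -/
def hilbP {n : ℕ} (I1 I2 : Set (Euc n)) (p v : Euc n) : ℝ :=
  Pmink I2 p v + Pmink I1 p (-v)

/-!
Along the segment `p + t • (q - p)` the rays towards `I₂` and `I₁` reach their boundary points
at times `1 + T₂ - t` and `T₁ + t`, so `P_H` integrates explicitly to `H(p, q)`.

For a general curve, separate each `Iᵢ` from its boundary point by a half-space `{f < c}`.
A ray `x + τ v` that reaches `closure Iᵢ` at time `τ` has then `τ * (-f v) ≥ f x - c`, so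
`Pᵢ(x, v) ≤ -f v / (f x - c)`: along the curve `P_H` is dominated by the derivative of
`log (f₁ - c₁) - log (f₂ - c₂)`, whose increment from `p` to `q` is `F₂(p, q) + F₁(q, p)`.
The curve never leaves the half-spaces `{f > c}`: at a crossing of `{f₂ = c₂}` its velocity
points into `I₂ ⊆ {f₂ < c₂}`, so the curve could not be back in `{f₂ > c₂}` at `q`;
symmetrically for `I₁`, starting from `p` and with `-γ'` pointing into `I₁`.
-/

open Set Filter Topology MeasureTheory

theorem pos_of_hasDerivAt_neg_of_eq_zero {g g' : ℝ → ℝ} {a b : ℝ}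
    (hg : ∀ t ∈ Icc a b, HasDerivAt g (g' t) t) (hzero : ∀ t ∈ Icc a b, g t = 0 → g' t < 0)
    (hb : 0 < g b) : ∀ t ∈ Icc a b, 0 < g t := by
  by_contra! ⟨t₀, ht₀, hgt₀⟩
  have hsub : Icc t₀ b ⊆ Icc a b := Icc_subset_Icc_left ht₀.1
  set Z := Icc t₀ b ∩ g ⁻¹' Iic 0
  have hZ : IsClosed Z := ContinuousOn.preimage_isClosed_of_isClosed
    (fun t ht => (hg t (hsub ht)).continuousAt.continuousWithinAt) isClosed_Icc isClosed_Iic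
  obtain ⟨⟨hT, hgT⟩, hTmax⟩ :=
    hZ.isGreatest_csSup ⟨t₀, ⟨le_rfl, ht₀.2⟩, hgt₀⟩ ⟨b, fun t ht => ht.1.2⟩
  -- the last point `T` where `g ≤ 0` is a zero of `g` with `g > 0` to its right
  set T := sSup Z
  have hTb : T < b := hT.2.lt_of_ne (by rintro h; rw [h] at hgT; exact hb.not_ge hgT)
  have hright : ∀ s ∈ Ioc T b, 0 < g s := fun s hs => by
    by_contra! h
    exact hs.1.not_ge (hTmax ⟨⟨hT.1.trans hs.1.le, hs.2⟩, h⟩)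
  have hdT := hg T (hsub hT)
  have hgT0 : g T = 0 := le_antisymm hgT <|
    ge_of_tendsto (hdT.continuousAt.tendsto.mono_left nhdsWithin_le_nhds)
      (mem_of_superset (Ioc_mem_nhdsGT hTb) fun s hs => (hright s hs).le)
  have hslope : Tendsto (slope g T) (𝓝[>] T) (𝓝 (g' T)) :=
    (hasDerivAt_iff_tendsto_slope.mp hdT).mono_left (nhdsWithin_mono _ fun s hs => ne_of_gt hs)
  obtain ⟨s, hs, hsneg⟩ := (Filter.Eventually.and (Ioc_mem_nhdsGT hTb)
    (hslope.eventually (gt_mem_nhds (hzero T (hsub hT) hgT0)))).exists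
  rw [slope_def_field, hgT0, sub_zero] at hsneg
  exact hsneg.not_gt (div_pos (hright s hs) (sub_pos.mpr hs.1))

theorem pos_of_hasDerivAt_pos_of_eq_zero {g g' : ℝ → ℝ} {a b : ℝ}
    (hg : ∀ t ∈ Icc a b, HasDerivAt g (g' t) t) (hzero : ∀ t ∈ Icc a b, g t = 0 → 0 < g' t)
    (ha : 0 < g a) : ∀ t ∈ Icc a b, 0 < g t := by
  have hneg : ∀ {s}, s ∈ Icc (-b) (-a) → -s ∈ Icc a b := fun hs =>
    ⟨le_neg_of_le_neg hs.2, neg_le.mp hs.1⟩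
  intro t ht
  simpa using pos_of_hasDerivAt_neg_of_eq_zero (g := fun s => g (-s)) (g' := fun s => -g' (-s))
    (fun s hs => by simpa [Function.comp_def] using (hg (-s) (hneg hs)).comp s (hasDerivAt_neg' s))
    (fun s hs h0 => neg_neg_of_pos (hzero (-s) (hneg hs) h0)) (by simpa using ha) (-t)
    ⟨neg_le_neg ht.2, neg_le_neg ht.1⟩

theorem intervalIntegral.integral_le_sub_of_le_hasDerivAt {P ℓ L : ℝ → ℝ} {a b : ℝ}
    (hab : a ≤ b) (hL : ∀ t ∈ Icc a b, HasDerivAt L (ℓ t) t) (hℓ : ContinuousOn ℓ (Icc a b))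
    (hP₀ : ∀ t ∈ Icc a b, 0 ≤ P t) (hPℓ : ∀ t ∈ Icc a b, P t ≤ ℓ t) :
    ∫ t in a..b, P t ≤ L b - L a := by
  rw [← uIcc_of_le hab] at hL hℓ
  have hℓi : IntervalIntegrable ℓ volume a b := hℓ.intervalIntegrable
  rw [← integral_eq_sub_of_hasDerivAt hL hℓi]
  by_cases hP : IntervalIntegrable P volume a b
  · exact integral_mono_on hab hP hℓi hPℓ
  · rw [integral_undef hP]
    exact integral_nonneg (μ := volume) hab fun t ht => (hP₀ t ht).trans (hPℓ t ht)

theorem add_smul_sub_symm {R E : Type*} [CommRing R] [AddCommGroup E] [Module R E]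
    (p q : E) (t : R) :
    p + t • (q - p) = q + (1 - t) • (p - q) := by
  module

section Funk

variable {n : ℕ} {I : Set (Euc n)}

theorem isLeast_tauF {x v : Euc n} (hx : x ∉ closure I)
    (hv : ∃ t > (0 : ℝ), x + t • v ∈ closure I) :
    IsLeast {t : ℝ | 0 < t ∧ x + t • v ∈ closure I} (tauF I x v) := by
  have hS : {t : ℝ | 0 < t ∧ x + t • v ∈ closure I} =
      Ici 0 ∩ (fun t : ℝ => x + t • v) ⁻¹' closure I := by
    ext t
    refine ⟨fun h => ⟨h.1.le, h.2⟩, fun ⟨h0, hmem⟩ => ⟨h0.lt_of_ne ?_, hmem⟩⟩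
    rintro rfl
    simp_all
  have hclosed : IsClosed {t : ℝ | 0 < t ∧ x + t • v ∈ closure I} := by
    rw [hS]
    exact isClosed_Ici.inter (isClosed_closure.preimage (by fun_prop))
  exact hclosed.isLeast_csInf hv ⟨0, fun t ht => ht.1.le⟩

theorem Pmink_nonneg (x v : Euc n) : 0 ≤ Pmink I x v :=
  one_div_nonneg.mpr (Real.sInf_nonneg fun _ ht => ht.1.le)

theorem add_tauF_smul_notMem (hop : IsOpen I) {x v : Euc n} (hx : x ∉ closure I)
    (hv : ∃ t > (0 : ℝ), x + t • v ∈ closure I) : x + tauF I x v • v ∉ I := by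
  intro hmem
  obtain ⟨⟨hτ, -⟩, hmin⟩ := isLeast_tauF hx hv
  have hev : ∀ᶠ t in 𝓝[<] tauF I x v, x + t • v ∈ I ∧ 0 < t :=
    (((by fun_prop : Continuous fun t : ℝ => x + t • v).continuousAt.eventually
      (hop.mem_nhds hmem)).and (eventually_gt_nhds hτ)).filter_mono nhdsWithin_le_nhds
  obtain ⟨t, ⟨htI, ht⟩, htτ⟩ := (hev.and self_mem_nhdsWithin).exists
  exact (hmin ⟨ht, subset_closure htI⟩).not_gt htτ

theorem funkF_eq_log {p q : Euc n} (hpq : p ≠ q) :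
    funkF I p q = Real.log ((1 + funkT0 I p q) / funkT0 I p q) := by
  have hT : 0 ≤ funkT0 I p q := Real.sInf_nonneg fun _ ht => ht.1.le
  have hqp : ‖q - p‖ ≠ 0 := norm_ne_zero_iff.mpr (sub_ne_zero.mpr hpq.symm)
  have hpb : p - funkB I p q = -((1 + funkT0 I p q) • (q - p)) := by rw [funkB]; module
  have hqb : q - funkB I p q = -(funkT0 I p q • (q - p)) := by rw [funkB]; module
  rw [funkF, if_neg hpq, dist_eq_norm, dist_eq_norm, hpb, hqb, norm_neg, norm_neg, norm_smul,
    norm_smul, Real.norm_of_nonneg (by linarith), Real.norm_of_nonneg hT,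
    mul_div_mul_right _ _ hqp]

theorem apply_neg_of_mem_Dcone {f : Euc n →L[ℝ] ℝ} {c : ℝ} (hf : I ⊆ {y | f y < c})
    {x v : Euc n} (hx : f x = c) (hv : v ∈ Dcone I x) : f v < 0 := by
  obtain ⟨s, hs, hsI⟩ := hv
  have h := hf hsI
  simp only [mem_ofPred_eq, map_add, map_smul, smul_eq_mul, hx] at h
  exact neg_of_mul_neg_right (by linarith) hs.le

theorem Pmink_le_of_subset_halfspace {f : Euc n →L[ℝ] ℝ} {c : ℝ} (hf : I ⊆ {y | f y < c})
    {x v : Euc n} (hx : x ∉ closure I) (hv : v ∈ Dcone I x) (hxc : 0 < f x - c) :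
    Pmink I x v ≤ -f v / (f x - c) := by
  obtain ⟨s, hs, hsI⟩ := hv
  obtain ⟨⟨hτ, hτI⟩, -⟩ := isLeast_tauF hx ⟨s, hs, subset_closure hsI⟩
  have h := closure_lt_subset_le f.continuous continuous_const (closure_mono hf hτI)
  simp only [mem_ofPred_eq, map_add, map_smul, smul_eq_mul] at h
  rw [Pmink, div_le_div_iff₀ hτ hxc]
  linarith

theorem apply_sub_pos_of_mem_Dcone {f : Euc n →L[ℝ] ℝ} {c : ℝ} (hf : I ⊆ {y | f y < c})
    {γ γ' : ℝ → Euc n} {a b : ℝ} (hγ : ∀ t ∈ Icc a b, HasDerivAt γ (γ' t) t)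
    (hD : ∀ t ∈ Icc a b, γ' t ∈ Dcone I (γ t)) (hb : 0 < f (γ b) - c) :
    ∀ t ∈ Icc a b, 0 < f (γ t) - c :=
  pos_of_hasDerivAt_neg_of_eq_zero
    (fun t ht => (f.hasFDerivAt.comp_hasDerivAt t (hγ t ht)).sub_const c)
    (fun t ht h0 => apply_neg_of_mem_Dcone hf (sub_eq_zero.mp h0) (hD t ht)) hb

theorem apply_sub_pos_of_neg_mem_Dcone {f : Euc n →L[ℝ] ℝ} {c : ℝ} (hf : I ⊆ {y | f y < c})
    {γ γ' : ℝ → Euc n} {a b : ℝ} (hγ : ∀ t ∈ Icc a b, HasDerivAt γ (γ' t) t)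
    (hD : ∀ t ∈ Icc a b, -γ' t ∈ Dcone I (γ t)) (ha : 0 < f (γ a) - c) :
    ∀ t ∈ Icc a b, 0 < f (γ t) - c :=
  pos_of_hasDerivAt_pos_of_eq_zero
    (fun t ht => (f.hasFDerivAt.comp_hasDerivAt t (hγ t ht)).sub_const c)
    (fun t ht h0 => neg_lt_zero.mp <| map_neg f (γ' t) ▸
      apply_neg_of_mem_Dcone hf (sub_eq_zero.mp h0) (hD t ht)) ha

namespace funkLt

variable {p q : Euc n}

theorem isLeast_funkT0 (h : funkLt I p q) :
    IsLeast {t : ℝ | 0 < t ∧ q + t • (q - p) ∈ closure I} (funkT0 I p q) :=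
  let ⟨_, hseg, t, ht, htI⟩ := h
  isLeast_tauF (hseg (right_mem_segment ℝ p q)) ⟨t, ht, subset_closure htI⟩

theorem sub_mem_Dcone (h : funkLt I p q) {t : ℝ} (ht : t ≤ 1) :
    q - p ∈ Dcone I (p + t • (q - p)) := by
  obtain ⟨-, -, s, hs, hsI⟩ := h
  exact ⟨1 - t + s, by linarith, by convert hsI using 1; module⟩

theorem tauF_segment (h : funkLt I p q) {t : ℝ} (ht : t ∈ Icc (0 : ℝ) 1) :
    tauF I (p + t • (q - p)) (q - p) = 1 + funkT0 I p q - t := by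
  obtain ⟨⟨hT, hb⟩, hmin⟩ := h.isLeast_funkT0
  refine IsLeast.csInf_eq ⟨⟨by linarith [ht.2], by convert hb using 1; module⟩, ?_⟩
  rintro s ⟨hs, hsI⟩
  rw [show p + t • (q - p) + s • (q - p) = p + (t + s) • (q - p) by module] at hsI
  rcases le_or_gt (t + s) 1 with h1 | h1
  · refine absurd hsI (h.2.1 ?_)
    rw [segment_eq_image']
    exact ⟨t + s, ⟨by linarith [ht.1], h1⟩, rfl⟩
  · have : funkT0 I p q ≤ t + s - 1 := hmin ⟨by linarith, by convert hsI using 1; module⟩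
    linarith

theorem exists_halfspace_calibration (hop : IsOpen I) (hconv : Convex ℝ I) (h : funkLt I p q) :
    ∃ (f : Euc n →L[ℝ] ℝ) (c : ℝ), I ⊆ {y | f y < c} ∧ 0 < f q - c ∧
      Real.log (f p - c) - Real.log (f q - c) = funkF I p q := by
  obtain ⟨⟨hT, -⟩, hmin⟩ := h.isLeast_funkT0
  obtain ⟨hpq, hseg, t₁, ht₁, ht₁I⟩ := h
  have hq : q ∉ closure I := hseg (right_mem_segment ℝ p q)
  obtain ⟨f, hf⟩ : ∃ f : Euc n →L[ℝ] ℝ, ∀ y ∈ I, f y < f (funkB I p q) :=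
    geometric_hahn_banach_open_point hconv hop
      (add_tauF_smul_notMem hop hq ⟨t₁, ht₁, subset_closure ht₁I⟩)
  set T := funkT0 I p q
  have hT₁ : T ≤ t₁ := hmin ⟨ht₁, subset_closure ht₁I⟩
  have hv : 0 < -f (q - p) := by
    have := hf _ ht₁I
    simp only [funkB, map_add, map_smul, smul_eq_mul] at this
    nlinarith
  have hfq : f q - f (funkB I p q) = T * -f (q - p) := by
    simp only [funkB, map_add, map_smul, smul_eq_mul]; ring
  have hfp : f p - f (funkB I p q) = (1 + T) * -f (q - p) := by
    simp only [funkB, map_add, map_smul, map_sub, smul_eq_mul]; ring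
  refine ⟨f, f (funkB I p q), hf, hfq ▸ mul_pos hT hv, ?_⟩
  rw [hfq, hfp, funkF_eq_log hpq, ← Real.log_div (mul_pos (by linarith) hv).ne' (mul_pos hT hv).ne',
    mul_div_mul_right _ _ hv.ne']

end funkLt

end Funk

namespace hilbLt

variable {n : ℕ} {I1 I2 : Set (Euc n)} {p q : Euc n}

theorem mem_Dcone_segment (hpq : hilbLt I1 I2 p q) {t : ℝ} (ht : t ∈ Icc (0 : ℝ) 1) :
    q - p ∈ Dcone I2 (p + t • (q - p)) ∧ p - q ∈ Dcone I1 (p + t • (q - p)) :=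
  ⟨hpq.1.sub_mem_Dcone ht.2, add_smul_sub_symm p q t ▸ hpq.2.sub_mem_Dcone (by linarith [ht.1])⟩

theorem hilbP_segment (hpq : hilbLt I1 I2 p q) {t : ℝ} (ht : t ∈ Icc (0 : ℝ) 1) :
    hilbP I1 I2 (p + t • (q - p)) (q - p) =
      (1 + funkT0 I2 p q - t)⁻¹ + (funkT0 I1 q p + t)⁻¹ := by
  have h₁ := hpq.2.tauF_segment (t := 1 - t) ⟨by linarith [ht.2], by linarith [ht.1]⟩
  rw [← add_smul_sub_symm] at h₁
  simp only [hilbP, Pmink, neg_sub, hpq.1.tauF_segment ht, h₁, one_div]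
  ring_nf

theorem integral_hilbP_segment (hpq : hilbLt I1 I2 p q) :
    ∫ t in (0 : ℝ)..1, hilbP I1 I2 (p + t • (q - p)) (q - p) = hilbH I1 I2 p q := by
  have hT₂ : 0 < funkT0 I2 p q := hpq.1.isLeast_funkT0.1.1
  have hT₁ : 0 < funkT0 I1 q p := hpq.2.isLeast_funkT0.1.1
  have hi₂ : IntervalIntegrable (fun t => (1 + funkT0 I2 p q - t)⁻¹) volume 0 1 :=
    (ContinuousOn.inv₀ (by fun_prop) fun t ht => by
      rw [uIcc_of_le zero_le_one] at ht; linarith [ht.2]).intervalIntegrable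
  have hi₁ : IntervalIntegrable (fun t => (funkT0 I1 q p + t)⁻¹) volume 0 1 :=
    (ContinuousOn.inv₀ (by fun_prop) fun t ht => by
      rw [uIcc_of_le zero_le_one] at ht; linarith [ht.1]).intervalIntegrable
  rw [intervalIntegral.integral_congr fun t ht =>
      hpq.hilbP_segment (by rwa [uIcc_of_le zero_le_one] at ht),
    intervalIntegral.integral_add hi₂ hi₁,
    intervalIntegral.integral_comp_sub_left (fun x => x⁻¹),
    intervalIntegral.integral_comp_add_left (fun x => x⁻¹), hilbH,
    funkF_eq_log hpq.1.1, funkF_eq_log hpq.2.1]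
  simp only [sub_zero, add_sub_cancel_left, add_zero]
  rw [integral_inv_of_pos hT₂ (by linarith), integral_inv_of_pos hT₁ (by linarith),
    add_comm (funkT0 I1 q p)]

theorem integral_hilbP_le (hop1 : IsOpen I1) (hconv1 : Convex ℝ I1)
    (hop2 : IsOpen I2) (hconv2 : Convex ℝ I2) (hpq : hilbLt I1 I2 p q) {γ γ' : ℝ → Euc n}
    (hγ : ∀ t ∈ Icc (0 : ℝ) 1, HasDerivAt γ (γ' t) t) (hγ' : ContinuousOn γ' (Icc (0 : ℝ) 1))
    (hγ0 : γ 0 = p) (hγ1 : γ 1 = q) (hΩ : ∀ t ∈ Icc (0 : ℝ) 1, γ t ∈ HOmega I1 I2)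
    (hD : ∀ t ∈ Icc (0 : ℝ) 1, γ' t ∈ Dcone I2 (γ t) ∧ -(γ' t) ∈ Dcone I1 (γ t)) :
    ∫ t in (0 : ℝ)..1, hilbP I1 I2 (γ t) (γ' t) ≤ hilbH I1 I2 p q := by
  obtain ⟨f₂, c₂, hf₂, hq₂, hF₂⟩ := hpq.1.exists_halfspace_calibration hop2 hconv2
  obtain ⟨f₁, c₁, hf₁, hp₁, hF₁⟩ := hpq.2.exists_halfspace_calibration hop1 hconv1
  have hpos₂ := apply_sub_pos_of_mem_Dcone hf₂ hγ (fun t ht => (hD t ht).1) (by rwa [hγ1])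
  have hpos₁ := apply_sub_pos_of_neg_mem_Dcone hf₁ hγ (fun t ht => (hD t ht).2) (by rwa [hγ0])
  have hγc : ContinuousOn γ (Icc 0 1) := fun t ht => (hγ t ht).continuousAt.continuousWithinAt
  have hL : ∀ t ∈ Icc (0 : ℝ) 1,
      HasDerivAt (fun s => Real.log (f₁ (γ s) - c₁) - Real.log (f₂ (γ s) - c₂))
        (f₁ (γ' t) / (f₁ (γ t) - c₁) - f₂ (γ' t) / (f₂ (γ t) - c₂)) t := fun t ht =>
    (((f₁.hasFDerivAt.comp_hasDerivAt t (hγ t ht)).sub_const c₁).log (hpos₁ t ht).ne').sub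
      (((f₂.hasFDerivAt.comp_hasDerivAt t (hγ t ht)).sub_const c₂).log (hpos₂ t ht).ne')
  have hℓ : ContinuousOn (fun t => f₁ (γ' t) / (f₁ (γ t) - c₁) - f₂ (γ' t) / (f₂ (γ t) - c₂))
      (Icc 0 1) := by
    refine ContinuousOn.sub ?_ ?_ <;> refine ContinuousOn.div (by fun_prop) (by fun_prop) ?_
    exacts [fun t ht => (hpos₁ t ht).ne', fun t ht => (hpos₂ t ht).ne']
  have hbound : ∀ t ∈ Icc (0 : ℝ) 1, hilbP I1 I2 (γ t) (γ' t) ≤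
      f₁ (γ' t) / (f₁ (γ t) - c₁) - f₂ (γ' t) / (f₂ (γ t) - c₂) := fun t ht => by
    have hb₂ := Pmink_le_of_subset_halfspace hf₂ (fun h => hΩ t ht (Or.inr h)) (hD t ht).1
      (hpos₂ t ht)
    have hb₁ := Pmink_le_of_subset_halfspace hf₁ (fun h => hΩ t ht (Or.inl h)) (hD t ht).2
      (hpos₁ t ht)
    rw [map_neg, neg_neg] at hb₁
    rw [hilbP, sub_eq_neg_add, ← neg_div]
    exact add_le_add hb₂ hb₁
  refine (intervalIntegral.integral_le_sub_of_le_hasDerivAt zero_le_one hL hℓ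
    (fun t _ => add_nonneg (Pmink_nonneg _ _) (Pmink_nonneg _ _)) hbound).trans_eq ?_
  simp only [hγ0, hγ1, hilbH]
  linarith

end hilbLt

theorem hilbH_is_finsler_general {n : ℕ} (I1 I2 : Set (Euc n))
    (hop1 : IsOpen I1) (hconv1 : Convex ℝ I1)
    (hop2 : IsOpen I2) (hconv2 : Convex ℝ I2)
    (p q : Euc n)
    (hpq : hilbLt I1 I2 p q) :
    (∀ t ∈ Set.Icc (0:ℝ) 1,
      q - p ∈ Dcone I2 (p + t • (q - p)) ∧ p - q ∈ Dcone I1 (p + t • (q - p))) ∧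
    (∫ t in (0:ℝ)..1, hilbP I1 I2 (p + t • (q - p)) (q - p)) = hilbH I1 I2 p q ∧
    (∀ γ γ' : ℝ → Euc n,
      (∀ t ∈ Set.Icc (0:ℝ) 1, HasDerivAt γ (γ' t) t) →
      ContinuousOn γ' (Set.Icc (0:ℝ) 1) →
      γ 0 = p → γ 1 = q →
      (∀ t ∈ Set.Icc (0:ℝ) 1, γ t ∈ HOmega I1 I2) →
      (∀ t ∈ Set.Icc (0:ℝ) 1, γ' t ∈ Dcone I2 (γ t) ∧ -(γ' t) ∈ Dcone I1 (γ t)) →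
      (∫ t in (0:ℝ)..1, hilbP I1 I2 (γ t) (γ' t)) ≤ hilbH I1 I2 p q) :=
  ⟨fun _ ht => hpq.mem_Dcone_segment ht, hpq.integral_hilbP_segment,
    fun _ _ hγ hγ' hγ0 hγ1 hΩ hD =>
      hpq.integral_hilbP_le hop1 hconv1 hop2 hconv2 hγ hγ' hγ0 hγ1 hΩ hD⟩

/-- the timelike Hilbert metric is the timelike Finsler metric of
`P_H(p,v) = P₂(p,v) + P₁(p,−v)`: along the straight segment `σ(t) = p + t•(q−p)` the
velocity is timelike in both Funk structures and `∫₀¹ P_H(σ(t), q−p) dt = H(p,q)`;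
moreover every timelike `C¹` curve from `p` to `q` has `P_H`-length at most `H(p,q)`. -/
theorem hilbH_is_finsler {n : ℕ} (hn : 1 ≤ n) (I1 I2 : Set (Euc n))
    (hne1 : I1.Nonempty) (hop1 : IsOpen I1) (hconv1 : Convex ℝ I1)
    (hne2 : I2.Nonempty) (hop2 : IsOpen I2) (hconv2 : Convex ℝ I2)
    (hdisj : Disjoint (closure I1) (closure I2))
    (p q : Euc n) (hp : p ∈ HOmega I1 I2) (hq : q ∈ HOmega I1 I2)
    (hpq : hilbLt I1 I2 p q) :
    (∀ t ∈ Set.Icc (0:ℝ) 1,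
      q - p ∈ Dcone I2 (p + t • (q - p)) ∧ p - q ∈ Dcone I1 (p + t • (q - p))) ∧
    (∫ t in (0:ℝ)..1, hilbP I1 I2 (p + t • (q - p)) (q - p)) = hilbH I1 I2 p q ∧
    (∀ γ γ' : ℝ → Euc n,
      (∀ t ∈ Set.Icc (0:ℝ) 1, HasDerivAt γ (γ' t) t) →
      ContinuousOn γ' (Set.Icc (0:ℝ) 1) →
      γ 0 = p → γ 1 = q →
      (∀ t ∈ Set.Icc (0:ℝ) 1, γ t ∈ HOmega I1 I2) →
      (∀ t ∈ Set.Icc (0:ℝ) 1, γ' t ∈ Dcone I2 (γ t) ∧ -(γ' t) ∈ Dcone I1 (γ t)) →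
      (∫ t in (0:ℝ)..1, hilbP I1 I2 (γ t) (γ' t)) ≤ hilbH I1 I2 p q) :=
  hilbH_is_finsler_general I1 I2 hop1 hconv1 hop2 hconv2 p q hpq
end
end

section
/- The de Sitter distance equals half the one-dimensional timelike Hilbert distance of the projections: for all real numbers t₁ < t₂, the projections sᵢ = Real.tanh tᵢ of the de Sitter points (sinh tᵢ, cosh tᵢ) satisfy −1 < s₁ < s₂ < 1 and H₍₋₁,₁₎(s₁, s₂) = Real.log (((1 − s₁) * (1 + s₂)) / ((1 − s₂) * (1 + s₁))) = 2 * (t₂ − t₁); hence the de Sitter arc-length distance t₂ − t₁ between the two points equals half the timelike Hilbert distance of their central projections to the interval (−1, 1). -/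
/-!
The logarithm of the cross ratio of `-1, a, b, 1` splits as a difference of the values of
`s ↦ log ((1 + s) / (1 - s)) = 2 artanh s` at `b` and at `a`. Since `artanh` inverts `tanh`,
the Hilbert distance of `tanh t₁` and `tanh t₂` is therefore `2 (t₂ - t₁)`.
-/

open Set

namespace Real

theorem strictMono_tanh : StrictMono tanh := fun x y hxy => by
  rwa [← artanh_lt_artanh_iff ⟨neg_one_lt_tanh x, tanh_lt_one x⟩
    ⟨neg_one_lt_tanh y, tanh_lt_one y⟩, artanh_tanh, artanh_tanh]

theorem log_crossRatio_eq_two_mul_artanh_sub {a b : ℝ} (ha : a ∈ Ioo (-1) 1)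
    (hb : b ∈ Ioo (-1) 1) :
    log (((1 - a) * (1 + b)) / ((1 - b) * (1 + a))) = 2 * (artanh b - artanh a) := by
  obtain ⟨ha₁, ha₂⟩ := ha
  obtain ⟨hb₁, hb₂⟩ := hb
  have hsplit : ((1 - a) * (1 + b)) / ((1 - b) * (1 + a))
      = ((1 + b) / (1 - b)) / ((1 + a) / (1 - a)) := by
    field_simp [show 1 - a ≠ 0 by linarith, show 1 + a ≠ 0 by linarith]
  have hb₀ : (1 + b) / (1 - b) ≠ 0 := (div_pos (by linarith) (by linarith)).ne'
  have ha₀ : (1 + a) / (1 - a) ≠ 0 := (div_pos (by linarith) (by linarith)).ne'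
  rw [hsplit, log_div hb₀ ha₀, artanh_eq_half_log ⟨hb₁.le, hb₂.le⟩,
    artanh_eq_half_log ⟨ha₁.le, ha₂.le⟩]
  ring

end Real

/-- the de Sitter distance equals half the one-dimensional timelike Hilbert
distance of the central projections: for `t₁ < t₂`, the projections `sᵢ = tanh tᵢ` of the
de Sitter points `(sinh tᵢ, cosh tᵢ)` satisfy `−1 < s₁ < s₂ < 1` and
`H₍₋₁,₁₎(s₁,s₂) = log (((1−s₁)(1+s₂))/((1−s₂)(1+s₁))) = 2 (t₂ − t₁)`; hence the de Sitter
arc-length distance `t₂ − t₁` equals half the timelike Hilbert distance. -/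
theorem deSitter_eq_half_hilbert (t₁ t₂ : ℝ) (h : t₁ < t₂) :
    -1 < Real.tanh t₁ ∧ Real.tanh t₁ < Real.tanh t₂ ∧ Real.tanh t₂ < 1 ∧
    Real.log (((1 - Real.tanh t₁) * (1 + Real.tanh t₂)) /
        ((1 - Real.tanh t₂) * (1 + Real.tanh t₁))) = 2 * (t₂ - t₁) ∧
    t₂ - t₁ = (1 / 2) *
      Real.log (((1 - Real.tanh t₁) * (1 + Real.tanh t₂)) /
        ((1 - Real.tanh t₂) * (1 + Real.tanh t₁))) := by
  have hHilbert : Real.log (((1 - Real.tanh t₁) * (1 + Real.tanh t₂)) /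
      ((1 - Real.tanh t₂) * (1 + Real.tanh t₁))) = 2 * (t₂ - t₁) := by
    rw [Real.log_crossRatio_eq_two_mul_artanh_sub
      ⟨Real.neg_one_lt_tanh t₁, Real.tanh_lt_one t₁⟩
      ⟨Real.neg_one_lt_tanh t₂, Real.tanh_lt_one t₂⟩, Real.artanh_tanh, Real.artanh_tanh]
  exact ⟨Real.neg_one_lt_tanh t₁, Real.strictMono_tanh h, Real.tanh_lt_one t₂, hHilbert,
    by rw [hHilbert]; ring⟩
end
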